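/- Let n ≥ 1, p ∈ ℝ with p ≠ 0, let a be a symmetric n×n real matrix, and let x ∈ ℝⁿ with xᵢ > 0 for all i and Σᵢ xᵢ = 1. Set G_p(x) := (Σᵢ xᵢᵖ)^{1/p}, πᵢ := xᵢᵖ / Σₖ xₖᵖ, and τᵢⱼ := (x − eᵢ)ᵀ a (x − eⱼ), where eᵢ is the i-th standard unit vector. Then the drift quantity g := −(1/(2 G_p(x))) Σᵢ Σⱼ (∂² G_p/∂xᵢ∂xⱼ)(x) · xᵢ xⱼ τᵢⱼ equals (1 − p) γ*_π(a), where γ*_π(a) := (1/2)(Σᵢ πᵢ aᵢᵢ − Σᵢ Σⱼ πᵢ aᵢⱼ πⱼ). -/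

import Mathlib

/-!
With `S = ∑ₖ xₖ ^ p`, the first partials of `G = S ^ (1 / p)` are
`∂ⱼG = S ^ (1 / p - 1) xⱼ ^ (p - 1)`, and differentiating once more gives
`xᵢ xⱼ ∂ᵢ∂ⱼG = (1 - p) G (πᵢ πⱼ - δᵢⱼ πᵢ)`. Since `∑ π = 1`, the kernel `πᵢ πⱼ - δᵢⱼ πᵢ` has
zero row and column sums, so it annihilates every part of `τᵢⱼ = xᵀ a x - (xᵀ a)ⱼ - (a x)ᵢ + aᵢⱼ`
depending on at most one index; what remains, `∑ᵢⱼ (πᵢ πⱼ - δᵢⱼ πᵢ) aᵢⱼ`, is `-2 γ*_π(a)`.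
-/

open Finset Matrix Real

variable {ι : Type*} [Fintype ι]

noncomputable def powerSum (p : ℝ) (y : ι → ℝ) : ℝ := ∑ i, y i ^ p

noncomputable def diversity (p : ℝ) (y : ι → ℝ) : ℝ := powerSum p y ^ (1 / p)

noncomputable def diversityWeight (p : ℝ) (y : ι → ℝ) (i : ι) : ℝ := y i ^ p / powerSum p y

noncomputable def excessGrowthRate (w : ι → ℝ) (a : Matrix ι ι ℝ) : ℝ :=
  (1 / 2) * (∑ i, w i * a i i - ∑ i, ∑ j, w i * a i j * w j)

def relCov [DecidableEq ι] (a : Matrix ι ι ℝ) (x : ι → ℝ) (i j : ι) : ℝ :=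
  (x - Pi.single i 1) ⬝ᵥ a *ᵥ (x - Pi.single j 1)

section RelativeCovariance

variable [DecidableEq ι]

theorem relCov_eq (a : Matrix ι ι ℝ) (x : ι → ℝ) (i j : ι) :
    relCov a x i j = x ⬝ᵥ a *ᵥ x - (x ᵥ* a) j - (a *ᵥ x) i + a i j := by
  simp only [relCov, mulVec_sub, dotProduct_sub, sub_dotProduct, single_one_dotProduct,
    mulVec_single_one, col_apply]
  rw [← dotProduct_single_one (x ᵥ* a), ← dotProduct_mulVec, mulVec_single_one]
  ring

theorem excessGrowthRate_eq_relCov {w : ι → ℝ} (hw : ∑ i, w i = 1) (a : Matrix ι ι ℝ)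
    (x : ι → ℝ) :
    excessGrowthRate w a =
      -(1 / 2) * ∑ i, ∑ j, (w i * w j - if i = j then w i else 0) * relCov a x i j := by
  set K : ι → ι → ℝ := fun i j => w i * w j - if i = j then w i else 0
  have hrow : ∀ i, ∑ j, K i j = 0 := fun i => by
    simp only [K, sum_sub_distrib, ← mul_sum, hw, sum_ite_eq, mem_univ, if_true, mul_one, sub_self]
  have hcol : ∀ j, ∑ i, K i j = 0 := fun j => by
    simp only [K, sum_sub_distrib, ← sum_mul, hw, sum_ite_eq', mem_univ, if_true, one_mul, sub_self]
  have hK : ∑ i, ∑ j, K i j * relCov a x i j = ∑ i, ∑ j, K i j * a i j := by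
    simp only [relCov_eq, mul_add, mul_sub, sum_add_distrib, sum_sub_distrib]
    rw [sum_comm (f := fun i j => K i j * (x ᵥ* a) j)]
    simp only [← sum_mul, hrow, hcol, zero_mul, sum_const_zero]
    ring
  rw [hK]
  simp only [K, excessGrowthRate, sub_mul, ite_mul, zero_mul, sum_sub_distrib, sum_ite_eq,
    mem_univ, if_true, mul_right_comm (w _) (w _) (a _ _)]
  ring

end RelativeCovariance

section Weights

variable [Nonempty ι] {p : ℝ} {y : ι → ℝ}

theorem powerSum_pos (hy : ∀ i, 0 < y i) : 0 < powerSum p y :=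
  sum_pos (fun i _ => rpow_pos_of_pos (hy i) p) univ_nonempty

theorem diversity_pos (hy : ∀ i, 0 < y i) : 0 < diversity p y :=
  rpow_pos_of_pos (powerSum_pos hy) _

theorem sum_diversityWeight (hy : ∀ i, 0 < y i) : ∑ i, diversityWeight p y i = 1 := by
  simp only [diversityWeight, ← sum_div]
  exact div_self (powerSum_pos hy).ne'

end Weights

section Derivatives

variable {p : ℝ} {x y : ι → ℝ}

theorem sum_smul_proj_apply_single [DecidableEq ι] (c : ι → ℝ) (j : ι) :
    (∑ i, c i • (ContinuousLinearMap.proj i : (ι → ℝ) →L[ℝ] ℝ)) (Pi.single j 1) = c j := by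
  simp [Pi.single_apply]

theorem hasFDerivAt_powerSum (hy : ∀ i, y i ≠ 0) :
    HasFDerivAt (powerSum p)
      (∑ i, (p * y i ^ (p - 1)) • (ContinuousLinearMap.proj i : (ι → ℝ) →L[ℝ] ℝ)) y :=
  HasFDerivAt.fun_sum fun i _ => (hasFDerivAt_apply i y).rpow_const (Or.inl (hy i))

theorem hasFDerivAt_diversity [Nonempty ι] (hy : ∀ i, 0 < y i) :
    HasFDerivAt (diversity p) ((1 / p * powerSum p y ^ (1 / p - 1)) •
      ∑ i, (p * y i ^ (p - 1)) • (ContinuousLinearMap.proj i : (ι → ℝ) →L[ℝ] ℝ)) y :=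
  (hasFDerivAt_powerSum fun i => (hy i).ne').rpow_const (Or.inl (powerSum_pos hy).ne')

theorem fderiv_diversity_apply_single [DecidableEq ι] [Nonempty ι] (hp : p ≠ 0)
    (hy : ∀ i, 0 < y i) (j : ι) :
    fderiv ℝ (diversity p) y (Pi.single j 1) = powerSum p y ^ (1 / p - 1) * y j ^ (p - 1) := by
  rw [(hasFDerivAt_diversity hy).fderiv, _root_.smul_apply, sum_smul_proj_apply_single,
    smul_eq_mul]
  field_simp

theorem eventually_forall_pos (hx : ∀ i, 0 < x i) : ∀ᶠ y in nhds x, ∀ i, 0 < y i :=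
  Filter.eventually_all.2 fun i =>
    continuousAt_const.eventually_lt (continuous_apply i).continuousAt (hx i)

theorem mul_mul_fderiv_fderiv_diversity [DecidableEq ι] [Nonempty ι] (hp : p ≠ 0)
    (hx : ∀ i, 0 < x i) (i j : ι) :
    x i * x j * fderiv ℝ (fun y => fderiv ℝ (diversity p) y (Pi.single j 1)) x (Pi.single i 1) =
      (1 - p) * diversity p x *
        (diversityWeight p x i * diversityWeight p x j -
          if i = j then diversityWeight p x i else 0) := by
  have hpartial : (fun y => fderiv ℝ (diversity p) y (Pi.single j 1)) =ᶠ[nhds x]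
      fun y => powerSum p y ^ (1 / p - 1) * y j ^ (p - 1) := by
    filter_upwards [eventually_forall_pos hx] with y hy using fderiv_diversity_apply_single hp hy j
  have hS := powerSum_pos (p := p) hx
  have hφ := ((hasFDerivAt_powerSum (p := p) fun k => (hx k).ne').rpow_const (p := 1 / p - 1)
    (Or.inl hS.ne')).fun_mul ((hasFDerivAt_apply j x).rpow_const (p := p - 1) (Or.inl (hx j).ne'))
  rw [hpartial.fderiv_eq, hφ.fderiv]
  have hxi := (hx i).ne'
  have hxj := (hx j).ne'
  simp only [_root_.add_apply, _root_.smul_apply, sum_smul_proj_apply_single, smul_eq_mul,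
    ContinuousLinearMap.proj_apply, diversity, diversityWeight,
    rpow_sub_one hS.ne', rpow_sub_one hxi, rpow_sub_one hxj]
  obtain rfl | hij := eq_or_ne i j
  · simp only [Pi.single_eq_same, if_true]
    field_simp
    ring
  · simp only [Pi.single_eq_of_ne hij.symm, hij, if_false]
    field_simp
    ring

end Derivatives

theorem diversity_drift_identity_general
    (n : ℕ) (hn : 1 ≤ n) (p : ℝ) (hp : p ≠ 0)
    (a : Matrix (Fin n) (Fin n) ℝ)
    (x : Fin n → ℝ) (hx : ∀ i, 0 < x i)
    (Gp : (Fin n → ℝ) → ℝ) (hGp : Gp = fun y => (∑ i, y i ^ p) ^ (1 / p))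
    (w : Fin n → ℝ) (hw : w = fun i => x i ^ p / ∑ k, x k ^ p)
    (τ : Fin n → Fin n → ℝ)
    (hτ : τ = fun i j => (x - Pi.single i 1) ⬝ᵥ a.mulVec (x - Pi.single j 1)) :
    -(1 / (2 * Gp x)) *
        (∑ i, ∑ j,
          (fderiv ℝ (fun y => fderiv ℝ Gp y (Pi.single j 1)) x (Pi.single i 1)) *
            (x i * x j * τ i j)) =
      (1 - p) * ((1 / 2) * (∑ i, w i * a i i - ∑ i, ∑ j, w i * a i j * w j)) := by
  have : Nonempty (Fin n) := ⟨⟨0, hn⟩⟩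
  obtain rfl : Gp = diversity p := hGp
  obtain rfl : w = diversityWeight p x := hw
  obtain rfl : τ = relCov a x := hτ
  change _ = (1 - p) * excessGrowthRate (diversityWeight p x) a
  have hG := (diversity_pos (p := p) hx).ne'
  have hterm : ∀ i j, fderiv ℝ (fun y => fderiv ℝ (diversity p) y (Pi.single j 1)) x
      (Pi.single i 1) * (x i * x j * relCov a x i j) = (1 - p) * diversity p x *
        ((diversityWeight p x i * diversityWeight p x j -
          if i = j then diversityWeight p x i else 0) * relCov a x i j) := fun i j => by
    linear_combination relCov a x i j * mul_mul_fderiv_fderiv_diversity hp hx i j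
  simp only [hterm, ← mul_sum]
  rw [excessGrowthRate_eq_relCov (sum_diversityWeight hx) a x]
  field_simp

/-- drift-process identity `g = (1-p) γ*_π(a)` for the
diversity-weighted portfolio with parameter `p ≠ 0`. -/
theorem diversity_drift_identity
    (n : ℕ) (hn : 1 ≤ n) (p : ℝ) (hp : p ≠ 0)
    (a : Matrix (Fin n) (Fin n) ℝ) (hsym : a.IsSymm)
    (x : Fin n → ℝ) (hx : ∀ i, 0 < x i) (hsum : ∑ i, x i = 1)
    (Gp : (Fin n → ℝ) → ℝ) (hGp : Gp = fun y => (∑ i, y i ^ p) ^ (1 / p))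
    (w : Fin n → ℝ) (hw : w = fun i => x i ^ p / ∑ k, x k ^ p)
    (τ : Fin n → Fin n → ℝ)
    (hτ : τ = fun i j => (x - Pi.single i 1) ⬝ᵥ a.mulVec (x - Pi.single j 1)) :
    -(1 / (2 * Gp x)) *
        (∑ i, ∑ j,
          (fderiv ℝ (fun y => fderiv ℝ Gp y (Pi.single j 1)) x (Pi.single i 1)) *
            (x i * x j * τ i j)) =
      (1 - p) * ((1 / 2) * (∑ i, w i * a i i - ∑ i, ∑ j, w i * a i j * w j)) :=
  diversity_drift_identity_general n hn p hp a x hx Gp hGp w hw τ hτ
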